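/- arXiv:1605.04991 — 2 statements merged into one kernel-verified Lean document; each statement's English description precedes it below -/
import Mathlib

section
/- Let N be a nilpotent group acting on a set X, and let g₁ ∈ N be an element having a unique fixed point x₀ in X (i.e., x₀ is the only point with g₁·x₀ = x₀). Then x₀ is a fixed point of every element of N. -/
/-!
If `g₁` has the unique fixed point `x₀` and the commutator `⁅g, g₁⁆` fixes `x₀`, then
`g₁ • (g⁻¹ • x₀) = g⁻¹ • (⁅g, g₁⁆ • (g₁ • x₀)) = g⁻¹ • x₀`, so `g⁻¹`, hence `g`, fixes `x₀`.
Climbing the upper central series, each term therefore lies in the stabilizer of `x₀`,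
and for a nilpotent group that series reaches the whole group.
-/

open MulAction
open scoped commutatorElement

section UniqueFixedPoint

variable {G X : Type*} [Group G] [MulAction G X] {g₁ : G} {x₀ : X}

theorem smul_eq_of_commutatorElement_smul_eq (hfix : g₁ • x₀ = x₀)
    (huniq : ∀ y : X, g₁ • y = y → y = x₀) {g : G} (hcomm : ⁅g, g₁⁆ • x₀ = x₀) :
    g • x₀ = x₀ := by
  have hinv : g⁻¹ • x₀ = x₀ := by
    refine huniq _ ?_
    have hconj : g₁ * g⁻¹ = g⁻¹ * ⁅g, g₁⁆ * g₁ := by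
      rw [commutatorElement_def]
      group
    rw [smul_smul, hconj, mul_smul, mul_smul, hfix, hcomm]
  rw [inv_smul_eq_iff] at hinv
  exact hinv.symm

theorem upperCentralSeries_le_stabilizer (hfix : g₁ • x₀ = x₀)
    (huniq : ∀ y : X, g₁ • y = y → y = x₀) (n : ℕ) :
    Subgroup.upperCentralSeries G n ≤ stabilizer G x₀ := by
  induction n with
  | zero => simp
  | succ n ih =>
    intro g hg
    exact smul_eq_of_commutatorElement_smul_eq hfix huniq
      (ih (Subgroup.mem_upperCentralSeries_succ_iff.mp hg g₁))

end UniqueFixedPoint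

theorem stmt_2 {N X : Type*} [Group N] [Group.IsNilpotent N] [MulAction N X]
    (g₁ : N) (x₀ : X) (hfix : g₁ • x₀ = x₀)
    (huniq : ∀ y : X, g₁ • y = y → y = x₀) :
    ∀ g : N, g • x₀ = x₀ := by
  intro g
  have hle := upperCentralSeries_le_stabilizer hfix huniq (Group.nilpotencyClass N)
  rw [Subgroup.upperCentralSeries_nilpotencyClass] at hle
  exact hle (Subgroup.mem_top g)
end

section
/- Let N be a finitely generated nilpotent group acting on a set X such that some element g₁ ∈ N has a unique fixed point x₀. Then the orbit N·x₀ equals {x₀}. -/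
/-!
Let `H` be the stabilizer of `x₀`. Whenever the commutator `⁅g, g₁⁆` fixes `x₀`, so does
`g g₁ g⁻¹`, hence `g₁` fixes `g⁻¹ • x₀`, which by uniqueness is `x₀`; thus `⁅g, g₁⁆ ∈ H`
forces `g ∈ H`. Climbing the upper central series, every term lies in `H`; for nilpotent `N`
the series reaches `N`, so `H = N` and the orbit of `x₀` is trivial.
-/

open MulAction commutatorElement

theorem Subgroup.upperCentralSeries_le_of_commutator_mem {G : Type*} [Group G] {H : Subgroup G}
    (g₁ : G) (hH : ∀ g, ⁅g, g₁⁆ ∈ H → g ∈ H) (n : ℕ) : upperCentralSeries G n ≤ H := by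
  induction n with
  | zero => simp
  | succ n ih => exact fun g hg => hH g (ih (mem_upperCentralSeries_succ_iff.mp hg g₁))

theorem Subgroup.eq_top_of_commutator_mem {G : Type*} [Group G] [Group.IsNilpotent G]
    {H : Subgroup G} (g₁ : G) (hH : ∀ g, ⁅g, g₁⁆ ∈ H → g ∈ H) : H = ⊤ := by
  rw [eq_top_iff, ← upperCentralSeries_nilpotencyClass]
  exact upperCentralSeries_le_of_commutator_mem g₁ hH _

theorem MulAction.mem_stabilizer_of_commutator_mem {G X : Type*} [Group G] [MulAction G X]
    {g₁ : G} {x₀ : X} (hfix : fixedBy X g₁ = {x₀}) {g : G}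
    (hg : ⁅g, g₁⁆ ∈ stabilizer G x₀) : g ∈ stabilizer G x₀ := by
  have hg₁ : g₁ ∈ stabilizer G x₀ := (Set.ext_iff.mp hfix x₀).mpr rfl
  have hconj : (g * g₁ * g⁻¹) • x₀ = x₀ :=
    (Subgroup.mul_mem_cancel_right _ (inv_mem hg₁)).mp hg
  have hfixed : g₁ • g⁻¹ • x₀ = g⁻¹ • x₀ := by
    rw [eq_inv_smul_iff]
    simpa only [mul_smul] using hconj
  exact inv_mem_iff.mp ((Set.ext_iff.mp hfix _).mp hfixed)

theorem MulAction.orbit_eq_singleton_of_stabilizer_eq_top {G X : Type*} [Group G]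
    [MulAction G X] {x₀ : X} (hstab : stabilizer G x₀ = ⊤) : orbit G x₀ = {x₀} := by
  ext y
  constructor
  · rintro ⟨g, rfl⟩
    exact mem_stabilizer_iff.mp (hstab ▸ Subgroup.mem_top g)
  · rintro rfl
    exact mem_orbit_self _

theorem stmt_9_general {N X : Type*} [Group N] [Group.IsNilpotent N] [MulAction N X]
    (g₁ : N) (x₀ : X)
    (huniq : {y : X | g₁ • y = y} = {x₀}) :
    MulAction.orbit N x₀ = {x₀} :=
  orbit_eq_singleton_of_stabilizer_eq_top <|
    Subgroup.eq_top_of_commutator_mem g₁ fun _ => mem_stabilizer_of_commutator_mem huniq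

theorem stmt_9 {N X : Type*} [Group N] [Group.IsNilpotent N] [MulAction N X]
    (hfg : Group.FG N) (g₁ : N) (x₀ : X)
    (huniq : {y : X | g₁ • y = y} = {x₀}) :
    MulAction.orbit N x₀ = {x₀} :=
  stmt_9_general g₁ x₀ huniq
end
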